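/- Let P be an LPOD and let M be a consistent, solid, ⪯-minimal four-valued model of P. Then M is a three-valued answer set of P. -/

import Mathlib

/-! Four truth values F < F* < T* < T. -/
inductive V4 : Type
  | F | Fs | Ts | T
  deriving DecidableEq, Repr

instance : Fintype V4 :=
  ⟨{V4.F, V4.Fs, V4.Ts, V4.T}, by intro x; cases x <;> simp⟩

namespace V4

def toNat : V4 → ℕ
  | F => 0
  | Fs => 1
  | Ts => 2
  | T => 3

theorem toNat_injective : Function.Injective toNat := by
  intro a b h
  cases a <;> cases b <;> simp_all [toNat]

instance : LinearOrder V4 := LinearOrder.lift' toNat toNat_injective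

instance : BoundedOrder V4 where
  top := T
  le_top a := by cases a <;> decide
  bot := F
  bot_le a := by cases a <;> decide

/-- Negation-as-failure: `not φ` is `T` if `φ ≤ F*`, else `F`. -/
def notv (a : V4) : V4 := if a ≤ Fs then T else F

/-- Ordered disjunction on truth values: `u × v = v` if `u = F*`, else `u`. -/
def times (a b : V4) : V4 := if a = Fs then b else a

end V4

variable {α : Type}

/-- A ground literal: an atom together with a polarity (`true` = the atom itself,
`false` = its strong negation). -/
structure Lit (α : Type) where
  atom : α
  positive : Bool
  deriving DecidableEq

/-- A (four-valued) interpretation assigns a truth value to every literal.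
Three-valued interpretations are the `solid` ones (no `T*` value). -/
abbrev Interp (α : Type) := Lit α → V4

/-- `I` is solid (equivalently, three-valued) if it assigns `T*` to no literal. -/
def solid (I : Interp α) : Prop := ∀ l, I l ≠ V4.Ts

/-- `I` is consistent: no atom has both the atom and its strong negation `T`. -/
def consistentI (I : Interp α) : Prop :=
  ∀ a : α, ¬ (I ⟨a, true⟩ = V4.T ∧ I ⟨a, false⟩ = V4.T)

/-- `I` takes values only in `{F, T}`. -/
def twoValued (I : Interp α) : Prop := ∀ l, I l = V4.F ∨ I l = V4.T

/-- Value of the conjunction of a list of literals. -/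
def evalConj (I : Interp α) (L : List (Lit α)) : V4 := (L.map I).foldr min V4.T

/-- Value of the conjunction `not B1 ∧ ⋯ ∧ not Bk`. -/
def evalNegs (I : Interp α) (L : List (Lit α)) : V4 :=
  (L.map (fun b => V4.notv (I b))).foldr min V4.T

/-- Value of the disjunction of a list of literals. -/
def evalDisj (I : Interp α) (L : List (Lit α)) : V4 := (L.map I).foldr max V4.F

/-- Value of an ordered disjunction of the given (nonempty) list of values.
(`F*` is a right identity for `×`, so the fold computes `v1 × ⋯ × vn`.) -/
def evalOD (vs : List V4) : V4 := vs.foldr V4.times V4.Fs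

/-- Pointwise `≤` on interpretations. -/
def interpLE (I J : Interp α) : Prop := ∀ l, I l ≤ J l

/-- The four-valued relation `⪯`: `u ⪯ v` iff `u = v` or `u ≺ v`, where
`F ≺ F*`, `F ≺ T*`, `F ≺ T` and `T* ≺ T`.  On three-valued (solid)
interpretations it restricts to the ordering generated by `F ≺ F*`, `F ≺ T`. -/
def preceq (u v : V4) : Prop :=
  u = v ∨ (u = V4.F ∧ v ≠ V4.F) ∨ (u = V4.Ts ∧ v = V4.T)

/-- Pointwise `⪯` on interpretations. -/
def interpPreceq (I J : Interp α) : Prop := ∀ l, preceq (I l) (J l)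

/-- The set of literals that are `T` in `I`. -/
def collapse (I : Interp α) : Set (Lit α) := { l | I l = V4.T }

/-! ### LPOD rules -/

/-- An LPOD rule `C1 × ⋯ × Cn ← A1,…,Am, not B1,…,not Bk` with head
`c1 :: cs` (so the head is nonempty). -/
structure Rule (α : Type) where
  c1 : Lit α
  cs : List (Lit α)
  pos : List (Lit α)
  neg : List (Lit α)

def Rule.headList (R : Rule α) : List (Lit α) := R.c1 :: R.cs

def Rule.headVal (R : Rule α) (I : Interp α) : V4 := evalOD (R.headList.map I)

def Rule.bodyVal (R : Rule α) (I : Interp α) : V4 :=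
  min (evalConj I R.pos) (evalNegs I R.neg)

/-- `I` satisfies the rule `R` (the rule evaluates to `T`). -/
def ruleSat (I : Interp α) (R : Rule α) : Prop := R.bodyVal I ≤ R.headVal I

/-- `I` is a model of the LPOD `P`. -/
def isModel (I : Interp α) (P : Set (Rule α)) : Prop := ∀ R ∈ P, ruleSat I R

/-! ### The ×-reduct of an LPOD -/

/-- A reduct rule `C ← [F*,] A1,…,Am`; `fstar` records whether the constant `F*`
occurs in the body. -/
structure RedRule (α : Type) where
  head : Lit α
  pos : List (Lit α)
  fstar : Bool

def RedRule.bodyVal (r : RedRule α) (I : Interp α) : V4 :=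
  min (if r.fstar then V4.Fs else V4.T) (evalConj I r.pos)

def redSat (I : Interp α) (r : RedRule α) : Prop := r.bodyVal I ≤ I r.head

def redModel (I : Interp α) (Q : Set (RedRule α)) : Prop := ∀ r ∈ Q, redSat I r

/-- Reduct rules generated by a head `C1,…,Cn`: rules `Cj ← F*, body` for
`j < r` and `Cr ← body`, where `r` is the least index with
`I C1 = ⋯ = I C_{r-1} = F*` and (`r = n` or `I Cr ≠ F*`). -/
def xredHead (I : Interp α) (body : List (Lit α)) : List (Lit α) → List (RedRule α)
  | [] => []
  | [c] => [⟨c, body, false⟩]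
  | c :: c' :: rest =>
    if I c = V4.Fs then ⟨c, body, true⟩ :: xredHead I body (c' :: rest)
    else [⟨c, body, false⟩]

/-- The ×-reduct of a rule w.r.t. `I`. -/
def xredRule (I : Interp α) (R : Rule α) : List (RedRule α) :=
  if ∃ b ∈ R.neg, I b = V4.T then [] else xredHead I R.pos R.headList

/-- The ×-reduct of an LPOD w.r.t. `I`. -/
def xreduct (I : Interp α) (P : Set (Rule α)) : Set (RedRule α) :=
  { r | ∃ R ∈ P, r ∈ xredRule I R }

/-- `M` is a three-valued answer set of the LPOD `P`: a consistent three-valued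
interpretation that is the `≤`-least (three-valued) model of `P^M_×`. -/
def threeAnswerSet (P : Set (Rule α)) (M : Interp α) : Prop :=
  solid M ∧ consistentI M ∧ redModel M (xreduct M P) ∧
  ∀ N : Interp α, solid N → redModel N (xreduct M P) → interpLE M N

/-! ### Two-valued notions: Brewka answer sets and GL answer sets -/

/-- A set of literals is consistent if it contains no complementary pair. -/
def twoConsistent (N : Set (Lit α)) : Prop :=
  ∀ a : α, ¬ (Lit.mk a true ∈ N ∧ Lit.mk a false ∈ N)

/-- `N` is a (two-valued) Brewka-model of the LPOD `P`. -/
def brewkaModel (N : Set (Lit α)) (P : Set (Rule α)) : Prop :=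
  ∀ R ∈ P, (∀ a ∈ R.pos, a ∈ N) → (∀ b ∈ R.neg, b ∉ N) → ∃ c ∈ R.headList, c ∈ N

/-- A positive rule `C ← A1,…,Am`. -/
structure PosRule (α : Type) where
  head : Lit α
  pos : List (Lit α)

/-- `N` is a two-valued model of a positive program. -/
def posModel (N : Set (Lit α)) (Q : Set (PosRule α)) : Prop :=
  ∀ r ∈ Q, (∀ a ∈ r.pos, a ∈ N) → r.head ∈ N

/-- The Brewka ×-reduct of an LPOD w.r.t. a set of literals `N`:
`Ci ← A1,…,Am` whenever `Ci ∈ N` and `N ∩ {C1,…,C_{i-1},B1,…,Bk} = ∅`. -/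
def brewkaReduct (N : Set (Lit α)) (P : Set (Rule α)) : Set (PosRule α) :=
  { r | ∃ R ∈ P, ∃ l1 l2 : List (Lit α),
      R.headList = l1 ++ r.head :: l2 ∧ r.pos = R.pos ∧ r.head ∈ N ∧
      (∀ c ∈ l1, c ∉ N) ∧ (∀ b ∈ R.neg, b ∉ N) }

/-- `N` is a Brewka answer set of the LPOD `P`. -/
def brewkaAnswerSet (P : Set (Rule α)) (N : Set (Lit α)) : Prop :=
  twoConsistent N ∧ brewkaModel N P ∧ posModel N (brewkaReduct N P) ∧
  ∀ N', posModel N' (brewkaReduct N P) → N ⊆ N'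

/-- The Gelfond–Lifschitz reduct of an extended logic program (an LPOD all
of whose rule heads are single literals) w.r.t. a set of literals `N`. -/
def glReduct (P : Set (Rule α)) (N : Set (Lit α)) : Set (PosRule α) :=
  { r | ∃ R ∈ P, (∀ b ∈ R.neg, b ∉ N) ∧ r.head = R.c1 ∧ r.pos = R.pos }

/-- `N` is a standard answer set of the extended logic program `P`: a consistent
set of literals that is the least model of `P^N`. -/
def stdAnswerSet (P : Set (Rule α)) (N : Set (Lit α)) : Prop :=
  twoConsistent N ∧ posModel N (glReduct P N) ∧
  ∀ N', posModel N' (glReduct P N) → N ⊆ N'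

/-! ### DLPODs -/

/-- A DLPOD rule `𝒞1 × ⋯ × 𝒞n ← A1,…,Am, not B1,…,not Bk`, where each `𝒞i`
is a disjunction of literals; the head is `c1 :: cs` (nonempty). -/
structure DRule (α : Type) where
  c1 : List (Lit α)
  cs : List (List (Lit α))
  pos : List (Lit α)
  neg : List (Lit α)

def DRule.headList (R : DRule α) : List (List (Lit α)) := R.c1 :: R.cs

def DRule.headVal (R : DRule α) (I : Interp α) : V4 :=
  evalOD (R.headList.map (evalDisj I))

def DRule.bodyVal (R : DRule α) (I : Interp α) : V4 :=
  min (evalConj I R.pos) (evalNegs I R.neg)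

def dRuleSat (I : Interp α) (R : DRule α) : Prop := R.bodyVal I ≤ R.headVal I

def isDModel (I : Interp α) (P : Set (DRule α)) : Prop := ∀ R ∈ P, dRuleSat I R

/-- A disjunctive reduct rule `𝒞 ← [F*,] A1,…,Am`. -/
structure DRedRule (α : Type) where
  head : List (Lit α)
  pos : List (Lit α)
  fstar : Bool

def DRedRule.bodyVal (r : DRedRule α) (I : Interp α) : V4 :=
  min (if r.fstar then V4.Fs else V4.T) (evalConj I r.pos)

def dredSat (I : Interp α) (r : DRedRule α) : Prop := r.bodyVal I ≤ evalDisj I r.head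

def dredModel (I : Interp α) (Q : Set (DRedRule α)) : Prop := ∀ r ∈ Q, dredSat I r

def dxredHead (I : Interp α) (body : List (Lit α)) :
    List (List (Lit α)) → List (DRedRule α)
  | [] => []
  | [c] => [⟨c, body, false⟩]
  | c :: c' :: rest =>
    if evalDisj I c = V4.Fs then ⟨c, body, true⟩ :: dxredHead I body (c' :: rest)
    else [⟨c, body, false⟩]

/-- The ×-reduct of a DLPOD rule w.r.t. `I`. -/
def dxredRule (I : Interp α) (R : DRule α) : List (DRedRule α) :=
  if ∃ b ∈ R.neg, I b = V4.T then [] else dxredHead I R.pos R.headList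

/-- The ×-reduct of a DLPOD w.r.t. `I`. -/
def dxreduct (I : Interp α) (P : Set (DRule α)) : Set (DRedRule α) :=
  { r | ∃ R ∈ P, r ∈ dxredRule I R }

/-- `M` is an answer set of the DLPOD `P`: a consistent three-valued
interpretation that is a `≤`-minimal (three-valued) model of `P^M_×`. -/
def dAnswerSet (P : Set (DRule α)) (M : Interp α) : Prop :=
  solid M ∧ consistentI M ∧ dredModel M (dxreduct M P) ∧
  ∀ N : Interp α, solid N → dredModel N (dxreduct M P) → interpLE N M → N = M

/-- A positive disjunctive rule `C1 ∨ ⋯ ∨ Cq ← A1,…,Am`. -/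
structure DPosRule (α : Type) where
  head : List (Lit α)
  pos : List (Lit α)

/-- `N` is a two-valued model of a positive disjunctive program. -/
def dposModel (N : Set (Lit α)) (Q : Set (DPosRule α)) : Prop :=
  ∀ r ∈ Q, (∀ a ∈ r.pos, a ∈ N) → ∃ c ∈ r.head, c ∈ N

/-- The Gelfond–Lifschitz reduct of a disjunctive extended logic program (a
DLPOD all of whose rule heads are single disjunctions). -/
def glDReduct (P : Set (DRule α)) (N : Set (Lit α)) : Set (DPosRule α) :=
  { r | ∃ R ∈ P, (∀ b ∈ R.neg, b ∉ N) ∧ r.head = R.c1 ∧ r.pos = R.pos }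

/-- `N` is a standard disjunctive answer set: a consistent set of literals that
is a minimal two-valued model of `P^N`. -/
def stdDAnswerSet (P : Set (DRule α)) (N : Set (Lit α)) : Prop :=
  twoConsistent N ∧ dposModel N (glDReduct P N) ∧
  ∀ N', dposModel N' (glDReduct P N) → N' ⊆ N → N' = N


/-! Both halves of the minimality claim compare `M` with an interpretation `J ⪯ M` built from a
model `N` of `P^M_×`: walking along each ordered head, the reduct rules satisfied by `N` show
that `J` is again a model of `P`, so `J = M` by `⪯`-minimality. Lowering to `T*` the literals
that are `T` in `M` but not in `N` shows that `N` is `T` wherever `M` is; after that,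
`J = min M N` gives `M ≤ N`. -/

namespace V4

theorem Fs_le_of_ne_F {a : V4} : a ≠ F → Fs ≤ a := by cases a <;> decide

theorem F_le (a : V4) : F ≤ a := by cases a <;> decide

theorem le_T (a : V4) : a ≤ T := by cases a <;> decide

theorem T_le_iff {a : V4} : T ≤ a ↔ a = T := by cases a <;> decide

theorem le_Ts_of_ne_T {a : V4} : a ≠ T → a ≤ Ts := by cases a <;> decide

theorem times_Fs_left (b : V4) : times Fs b = b := rfl

theorem times_Fs_right (a : V4) : times a Fs = a := by cases a <;> rfl

theorem times_of_ne_Fs {a : V4} (h : a ≠ Fs) (b : V4) : times a b = a := if_neg h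

theorem preceq_min_self : ∀ a b : V4, a ≠ Ts → (a = T → b = T) → preceq (min a b) a := by
  unfold preceq; decide

end V4

open V4

section

variable {I J M N : Interp α}

theorem solid.le_Fs (hs : solid I) {l : Lit α} (h : I l ≠ T) : I l ≤ Fs := by
  have := hs l
  revert h this; cases I l <;> decide

theorem solid.eq_F_or_eq_T (hs : solid I) {l : Lit α} (h : I l ≠ Fs) : I l = F ∨ I l = T := by
  have := hs l
  revert h this; cases I l <;> decide

theorem le_evalConj_iff {L : List (Lit α)} {v : V4} :
    v ≤ evalConj I L ↔ ∀ a ∈ L, v ≤ I a := by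
  induction L with
  | nil => simp [evalConj, le_T]
  | cons a L ih =>
    rw [evalConj, List.map_cons, List.foldr_cons, le_min_iff, ← evalConj, ih]
    simp

theorem evalConj_eq_T_iff {L : List (Lit α)} : evalConj I L = T ↔ ∀ a ∈ L, I a = T := by
  simp only [← T_le_iff, le_evalConj_iff]

theorem evalConj_mono {L : List (Lit α)} (h : ∀ a ∈ L, I a ≤ J a) :
    evalConj I L ≤ evalConj J L :=
  le_evalConj_iff.2 fun a ha => (le_evalConj_iff.1 le_rfl a ha).trans (h a ha)

theorem evalConj_max_const (L : List (Lit α)) (v : V4) :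
    evalConj (fun l => max (I l) v) L = max (evalConj I L) v := by
  induction L with
  | nil => exact (max_eq_left (le_T v)).symm
  | cons a L ih =>
    simp only [evalConj, List.map_cons, List.foldr_cons] at ih ⊢
    rw [ih, max_min_distrib_right]

theorem evalNegs_eq_T {L : List (Lit α)} (h : ∀ b ∈ L, I b ≤ Fs) : evalNegs I L = T := by
  induction L with
  | nil => rfl
  | cons b L ih =>
    rw [evalNegs, List.map_cons, List.foldr_cons, ← evalNegs,
      ih fun b' hb' => h b' (List.mem_cons_of_mem b hb'), notv, if_pos (h b List.mem_cons_self)]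
    rfl

theorem evalNegs_eq_F {L : List (Lit α)} {b : Lit α} (hb : b ∈ L) (h : ¬ I b ≤ Fs) :
    evalNegs I L = F := by
  induction L with
  | nil => simp at hb
  | cons b' L ih =>
    rw [evalNegs, List.map_cons, List.foldr_cons, ← evalNegs]
    rcases List.mem_cons.1 hb with rfl | hb
    · rw [notv, if_neg h]; exact min_eq_left (F_le _)
    · rw [ih hb]; exact min_eq_right (F_le _)

theorem ruleSat_of_blocked {R : Rule α} {b : Lit α} (hb : b ∈ R.neg) (h : ¬ I b ≤ Fs) :
    ruleSat I R := by
  rw [ruleSat, Rule.bodyVal, evalNegs_eq_F hb h, min_eq_right (F_le _)]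
  exact F_le _

theorem ruleSat_iff_of_unblocked {R : Rule α} (h : ∀ b ∈ R.neg, I b ≤ Fs) :
    ruleSat I R ↔ evalConj I R.pos ≤ evalOD (R.headList.map I) := by
  rw [ruleSat, Rule.bodyVal, evalNegs_eq_T h, min_eq_left (le_T _), Rule.headVal]

theorem evalOD_cons (v : V4) (vs : List V4) : evalOD (v :: vs) = times v (evalOD vs) := rfl

theorem evalOD_singleton (v : V4) : evalOD [v] = v := times_Fs_right v

theorem redSat_false {c : Lit α} {pos : List (Lit α)} :
    redSat I ⟨c, pos, false⟩ ↔ evalConj I pos ≤ I c := by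
  simp [redSat, RedRule.bodyVal, le_T]

theorem redSat_true {c : Lit α} {pos : List (Lit α)} :
    redSat I ⟨c, pos, true⟩ ↔ min Fs (evalConj I pos) ≤ I c := Iff.rfl

theorem mem_xreduct {P : Set (Rule α)} {R : Rule α} (hR : R ∈ P)
    (hunb : ¬ ∃ b ∈ R.neg, I b = T) {r : RedRule α} (hr : r ∈ xredHead I R.pos R.headList) :
    r ∈ xreduct I P :=
  ⟨R, hR, by rw [xredRule, if_neg hunb]; exact hr⟩

theorem le_evalOD_of_redSat_xredHead {pos : List (Lit α)} (hM : solid M)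
    (hFs : ∀ c, M c = Fs → Fs ≤ N c → J c = Fs)
    (hT : ∀ c, M c = T → Ts ≤ J c) (hTT : ∀ c, M c = T → N c = T → J c = T)
    (hJ : Fs ≤ evalConj J pos) (hJM : evalConj J pos ≤ evalConj M pos)
    (hN : Fs ≤ evalConj N pos) (hJN : evalConj J pos = T → evalConj N pos = T)
    (hd : List (Lit α)) (hMhd : evalConj M pos ≤ evalOD (hd.map M))
    (hNhd : ∀ r ∈ xredHead M pos hd, redSat N r) :
    evalConj J pos ≤ evalOD (hd.map J) := by
  have step : ∀ c, M c ≠ Fs → evalConj M pos ≤ M c → evalConj N pos ≤ N c →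
      evalConj J pos ≤ J c ∧ J c ≠ Fs := by
    intro c hc hMc hNc
    rcases hM.eq_F_or_eq_T hc with hF | hMT
    · exact absurd (hJ.trans (hJM.trans (hF ▸ hMc))) (by decide)
    have hJc := hT c hMT
    refine ⟨?_, fun h => absurd (h ▸ hJc) (by decide)⟩
    by_cases hJT : evalConj J pos = T
    · rw [hJT, hTT c hMT (T_le_iff.1 ((T_le_iff.2 (hJN hJT)).trans hNc))]
    · exact (le_Ts_of_ne_T hJT).trans hJc
  induction hd using xredHead.induct M with
  | case1 => exact hJM.trans hMhd
  | case2 c =>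
    have hNc := redSat_false.1 (hNhd ⟨c, pos, false⟩ (by simp [xredHead]))
    rw [List.map_singleton, evalOD_singleton] at hMhd ⊢
    by_cases hc : M c = Fs
    · rw [hFs c hc (hN.trans hNc)]; exact hJM.trans (hc ▸ hMhd)
    · exact (step c hc hMhd hNc).1
  | case3 c c' rest hc ih =>
    have hNc := redSat_true.1 (hNhd ⟨c, pos, true⟩ (by simp [xredHead, hc]))
    rw [min_eq_left hN] at hNc
    rw [List.map_cons, evalOD_cons, hFs c hc hNc, times_Fs_left]
    rw [List.map_cons, evalOD_cons, hc, times_Fs_left] at hMhd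
    exact ih hMhd fun r hr => hNhd r (by simp [xredHead, hc, hr])
  | case4 c c' rest hc =>
    have hNc := redSat_false.1 (hNhd ⟨c, pos, false⟩ (by simp [xredHead, hc]))
    rw [List.map_cons, evalOD_cons, times_of_ne_Fs hc] at hMhd
    have hstep := step c hc hMhd hNc
    rw [List.map_cons, evalOD_cons, times_of_ne_Fs hstep.2]
    exact hstep.1

theorem redSat_of_mem_xredHead_self {pos : List (Lit α)} (hd : List (Lit α))
    (h : evalConj M pos ≤ evalOD (hd.map M)) : ∀ r ∈ xredHead M pos hd, redSat M r := by
  induction hd using xredHead.induct M with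
  | case1 => simp [xredHead]
  | case2 c =>
    rw [List.map_singleton, evalOD_singleton] at h
    simpa [xredHead, redSat_false] using h
  | case3 c c' rest hc ih =>
    rw [List.map_cons, evalOD_cons, hc, times_Fs_left] at h
    simp only [xredHead, if_pos hc, List.mem_cons, forall_eq_or_imp]
    exact ⟨redSat_true.2 (hc ▸ min_le_left _ _), ih h⟩
  | case4 c c' rest hc =>
    rw [List.map_cons, evalOD_cons, times_of_ne_Fs hc] at h
    simp only [xredHead, if_neg hc, List.mem_singleton, forall_eq]
    exact redSat_false.2 h

theorem redModel_xreduct_self {P : Set (Rule α)} (hs : solid M) (hm : isModel M P) :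
    redModel M (xreduct M P) := by
  rintro r ⟨R, hR, hr⟩
  rw [xredRule] at hr
  split_ifs at hr with hblk
  · simp at hr
  · push Not at hblk
    have hR := (ruleSat_iff_of_unblocked fun b hb => hs.le_Fs (hblk b hb)).1 (hm R hR)
    exact redSat_of_mem_xredHead_self _ hR r hr

theorem redModel_max_Fs {Q : Set (RedRule α)} (h : redModel N Q) :
    redModel (fun l => max (N l) Fs) Q := by
  intro r hr
  have hr := h r hr
  unfold redSat RedRule.bodyVal at hr ⊢
  rw [evalConj_max_const, min_max_distrib_left]
  exact max_le_max hr (min_le_right _ _)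

theorem isModel_of_redModel_xreduct {P : Set (Rule α)} (hs : solid M) (hm : isModel M P)
    (hN : redModel N (xreduct M P)) (hJM : ∀ l, J l ≤ M l)
    (hJN : ∀ l, Fs ≤ J l → Fs ≤ N l) (hJNT : ∀ l, J l = T → N l = T)
    (hFs : ∀ l, M l = Fs → Fs ≤ N l → J l = Fs)
    (hT : ∀ l, M l = T → Ts ≤ J l) (hTT : ∀ l, M l = T → N l = T → J l = T) :
    isModel J P := by
  intro R hR
  by_cases hblk : ∃ b ∈ R.neg, M b = T
  · obtain ⟨b, hb, hMb⟩ := hblk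
    exact ruleSat_of_blocked hb fun h => absurd ((hT b hMb).trans h) (by decide)
  have hMneg : ∀ b ∈ R.neg, M b ≤ Fs := fun b hb => hs.le_Fs fun h => hblk ⟨b, hb, h⟩
  rw [ruleSat_iff_of_unblocked fun b hb => (hJM b).trans (hMneg b hb)]
  rcases eq_or_ne (evalConj J R.pos) F with hF | hF
  · rw [hF]; exact F_le _
  have hJ := Fs_le_of_ne_F hF
  exact le_evalOD_of_redSat_xredHead hs hFs hT hTT hJ (evalConj_mono fun a _ => hJM a)
    (le_evalConj_iff.2 fun a ha => hJN a (le_evalConj_iff.1 hJ a ha))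
    (fun h => evalConj_eq_T_iff.2 fun a ha => hJNT a (evalConj_eq_T_iff.1 h a ha))
    R.headList ((ruleSat_iff_of_unblocked hMneg).1 (hm R hR))
    fun r hr => hN r (mem_xreduct hR hblk hr)

theorem eq_T_of_redModel_xreduct {P : Set (Rule α)} (hs : solid M) (hm : isModel M P)
    (hmin : ∀ J : Interp α, isModel J P → interpPreceq J M → J = M)
    (hN : redModel N (xreduct M P)) {l : Lit α} (hl : M l = T) : N l = T := by
  set J : Interp α := fun k => if M k = T ∧ N k ≠ T then Ts else M k with hJ
  -- Raising `N` to `F*` keeps it a model of the reduct and does not change where it is `T`.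
  have hJP : isModel J P := by
    refine isModel_of_redModel_xreduct hs hm (redModel_max_Fs hN) ?_
      (fun _ _ => le_max_right _ _) ?_ ?_ ?_ ?_ <;> intro k <;> simp only [hJ] <;>
      generalize M k = a <;> generalize N k = b <;> revert a b <;> decide
  have hJM : interpPreceq J M := by
    intro k
    simp only [hJ]
    split_ifs with h
    · exact Or.inr (Or.inr ⟨rfl, h.1⟩)
    · exact Or.inl rfl
  by_contra hNl
  have := congrFun (hmin J hJP hJM) l
  simp [hJ, hl, hNl] at this

theorem le_of_redModel_xreduct {P : Set (Rule α)} (hs : solid M) (hm : isModel M P)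
    (hmin : ∀ J : Interp α, isModel J P → interpPreceq J M → J = M)
    (hN : redModel N (xreduct M P)) : interpLE M N := by
  have hMN := fun l => eq_T_of_redModel_xreduct hs hm hmin hN (l := l)
  set J : Interp α := fun l => min (M l) (N l) with hJ
  have hJN : ∀ l, J l ≤ N l := fun l => min_le_right _ _
  have hJP : isModel J P :=
    isModel_of_redModel_xreduct hs hm hN (fun l => min_le_left _ _) (fun l h => h.trans (hJN l))
      (fun l h => T_le_iff.1 (h ▸ hJN l)) (fun l hl h => by simp [hJ, hl, h])
      (fun l hl => show Ts ≤ min (M l) (N l) by rw [hl, hMN l hl]; decide)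
      (fun l hl h => by simp [hJ, hl, h])
  have hJM := hmin J hJP fun l => preceq_min_self _ _ (hs l) (hMN l)
  exact fun l => min_eq_left_iff.1 (congrFun hJM l)

end

/-- Every consistent, solid, `⪯`-minimal four-valued model of
an LPOD `P` is a three-valued answer set of `P`. -/
theorem minimal_solid_implies_threeAnswerSet {α : Type} (P : Set (Rule α))
    (M : Interp α) (hc : consistentI M) (hs : solid M) (hm : isModel M P)
    (hmin : ∀ N : Interp α, isModel N P → interpPreceq N M → N = M) :
    threeAnswerSet P M :=
  ⟨hs, hc, redModel_xreduct_self hs hm,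
    fun _ _ hN => le_of_redModel_xreduct hs hm hmin hN⟩
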